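/- A ≤⋄ B if and only if for every m×n matrix W one has A† = A† B A† + A† W A† − A† B B† W B† B A†. -/

import Mathlib

open Matrix

/-!
Writing `A†` for the Moore–Penrose inverse, the three defining conditions of `A ≤⋄ B`
translate, through `range A = range A†ᴴ` and `range Aᴴ = range A†`, into
`A† B B† = A†`, `B† B A† = A†` and `A† B A† = A†`. Given the last one, the identity in `W`
says `A† W A† = (A† B B†) W (B† B A†)` for all `W`. Since `B B†` and `B† B` are idempotent,
substituting `W B† B` (resp. `B B† W`) for `W` turns this into `A† W (B† B A† - A†) = 0`
(resp. `(A† B B† - A†) W A† = 0`) for all `W`, and testing against matrix units forces the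
first two conditions unless `A† = 0`, in which case they hold trivially.
-/

/-- Column space (range) of a complex matrix. -/
noncomputable def mrange {m n : Type*} [Fintype n] (A : Matrix m n ℂ) : Submodule ℂ (m → ℂ) :=
  LinearMap.range A.mulVecLin

/-- The diamond partial order on rectangular complex matrices. -/
def diamondLE {m n : Type*} [Fintype m] [Fintype n] (A B : Matrix m n ℂ) : Prop :=
  mrange A ≤ mrange B ∧ mrange Aᴴ ≤ mrange Bᴴ ∧ A * Bᴴ * A = A * Aᴴ * A

/-- `X` satisfies the four Penrose equations for `A`. -/
def IsMP {m n : Type*} [Fintype m] [Fintype n] (A : Matrix m n ℂ) (X : Matrix n m ℂ) : Prop :=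
  A * X * A = A ∧ X * A * X = X ∧ (A * X)ᴴ = A * X ∧ (X * A)ᴴ = X * A

namespace Matrix

variable {l m n o R : Type*} [Fintype m] [Fintype n] [DecidableEq m] [DecidableEq n]

lemma mul_single_one_mul_apply [Semiring R] (M : Matrix l m R) (N : Matrix n o R)
    (i : m) (j : n) (k : l) (p : o) :
    (M * single i j (1 : R) * N) k p = M k i * N j p := by
  simp [mul_apply, single, ite_and, mul_ite]

lemma eq_zero_or_eq_zero_of_forall_mul_mul_eq_zero [Semiring R] [NoZeroDivisors R]
    {M : Matrix l m R} {N : Matrix n o R} (h : ∀ W : Matrix m n R, M * W * N = 0) :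
    M = 0 ∨ N = 0 := by
  by_contra! hMN
  obtain ⟨k, i, hki⟩ : ∃ k i, M k i ≠ 0 := by simpa [← Matrix.ext_iff] using hMN.1
  obtain ⟨j, p, hjp⟩ : ∃ j p, N j p ≠ 0 := by simpa [← Matrix.ext_iff] using hMN.2
  have hentry := congr_fun₂ (h (single i j 1)) k p
  rw [mul_single_one_mul_apply] at hentry
  exact mul_ne_zero hki hjp hentry

lemma mul_eq_self_and_eq_self_of_forall_mul_mul_eq [Ring R] [NoZeroDivisors R]
    {X : Matrix n m R} {E : Matrix m m R} {F : Matrix n n R}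
    (hE : IsIdempotentElem E) (hF : IsIdempotentElem F)
    (h : ∀ W : Matrix m n R, X * W * X = X * E * W * (F * X)) :
    X * E = X ∧ F * X = X := by
  rcases eq_or_ne X 0 with rfl | hX
  · simp
  have hright : ∀ W : Matrix m n R, X * W * (F * X - X) = 0 := fun W =>
    calc X * W * (F * X - X) = X * (W * F) * X - X * W * X := by
          rw [Matrix.mul_sub]; simp only [Matrix.mul_assoc]
      _ = X * E * W * (F * F * X) - X * W * X := by rw [h]; simp only [Matrix.mul_assoc]
      _ = 0 := by rw [hF.eq, ← h, sub_self]
  have hleft : ∀ W : Matrix m n R, (X * E - X) * W * X = 0 := fun W =>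
    calc (X * E - X) * W * X = X * (E * W) * X - X * W * X := by
          rw [Matrix.sub_mul, Matrix.sub_mul]; simp only [Matrix.mul_assoc]
      _ = X * (E * E) * W * (F * X) - X * W * X := by rw [h]; simp only [Matrix.mul_assoc]
      _ = 0 := by rw [hE.eq, ← h, sub_self]
  exact ⟨sub_eq_zero.mp ((eq_zero_or_eq_zero_of_forall_mul_mul_eq_zero hleft).resolve_right hX),
    sub_eq_zero.mp ((eq_zero_or_eq_zero_of_forall_mul_mul_eq_zero hright).resolve_left hX)⟩

lemma forall_eq_add_mul_mul_sub_iff [Ring R] [NoZeroDivisors R]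
    {B : Matrix m n R} {Bd X : Matrix n m R} (hB : B * Bd * B = B) :
    (∀ W : Matrix m n R, X = X * B * X + X * W * X - X * B * Bd * W * Bd * B * X) ↔
      X * B * Bd = X ∧ Bd * B * X = X ∧ X * B * X = X := by
  constructor
  · intro h
    have hXBX : X * B * X = X := by simpa using (h 0).symm
    have hsandwich : ∀ W : Matrix m n R, X * W * X = X * (B * Bd) * W * (Bd * B * X) := by
      intro W
      have hW := h W
      rw [hXBX, add_sub_assoc, left_eq_add, sub_eq_zero] at hW
      rw [hW]
      simp only [Matrix.mul_assoc]
    have hE : IsIdempotentElem (B * Bd) := by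
      rw [IsIdempotentElem, ← Matrix.mul_assoc, hB]
    have hF : IsIdempotentElem (Bd * B) := by
      rw [IsIdempotentElem, Matrix.mul_assoc, ← Matrix.mul_assoc B, hB]
    obtain ⟨hP, hQ⟩ := mul_eq_self_and_eq_self_of_forall_mul_mul_eq hE hF hsandwich
    exact ⟨by rw [Matrix.mul_assoc, hP], hQ, hXBX⟩
  · rintro ⟨hP, hQ, hXBX⟩ W
    rw [hXBX, show X * B * Bd * W * Bd * B * X = X * B * Bd * W * (Bd * B * X) by
      simp only [Matrix.mul_assoc], hP, hQ, add_sub_cancel_right]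

end Matrix

section MoorePenrose

variable {m n : Type*} [Fintype n]

lemma mrange_mul_le {k : Type*} [Fintype k] (B : Matrix m n ℂ) (X : Matrix n k ℂ) :
    mrange (B * X) ≤ mrange B := by
  rw [mrange, mrange, mulVecLin_mul]
  exact LinearMap.range_comp_le_range _ _

variable [Fintype m]

lemma mrange_le_mrange_iff {k : Type*} [Fintype k] {A : Matrix m k ℂ} {B : Matrix m n ℂ}
    {Bd : Matrix n m ℂ} (hB : B * Bd * B = B) : mrange A ≤ mrange B ↔ B * Bd * A = A := by
  refine ⟨fun h => ext_iff_mulVec.mpr fun v => ?_, fun h => ?_⟩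
  · obtain ⟨u, hu⟩ := h ⟨v, rfl⟩
    change B *ᵥ u = A *ᵥ v at hu
    rw [← mulVec_mulVec, ← hu, mulVec_mulVec, hB]
  · rw [← h, Matrix.mul_assoc]
    exact mrange_mul_le _ _

namespace IsMP

variable {A : Matrix m n ℂ} {X : Matrix n m ℂ}

lemma symm (h : IsMP A X) : IsMP X A :=
  ⟨h.2.1, h.1, h.2.2.2, h.2.2.1⟩

lemma conjTranspose (h : IsMP A X) : IsMP Aᴴ Xᴴ := by
  obtain ⟨h1, h2, h3, h4⟩ := h
  refine ⟨?_, ?_, ?_, ?_⟩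
  · rw [← conjTranspose_mul, ← conjTranspose_mul, ← Matrix.mul_assoc, h1]
  · rw [← conjTranspose_mul, ← conjTranspose_mul, ← Matrix.mul_assoc, h2]
  · rw [← conjTranspose_mul, conjTranspose_conjTranspose, h4]
  · rw [← conjTranspose_mul, conjTranspose_conjTranspose, h3]

lemma mul_conjTranspose_mul_conjTranspose (h : IsMP A X) : X * Xᴴ * Aᴴ = X := by
  rw [Matrix.mul_assoc, ← conjTranspose_mul, h.2.2.1, ← Matrix.mul_assoc, h.2.1]

lemma conjTranspose_mul_conjTranspose_mul (h : IsMP A X) : Aᴴ * Xᴴ * X = X := by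
  rw [← conjTranspose_mul, h.2.2.2, h.2.1]

lemma conjTranspose_mul_self_mul (h : IsMP A X) : Aᴴ * A * X = Aᴴ := by
  rw [Matrix.mul_assoc, ← h.2.2.1, ← conjTranspose_mul, h.1]

lemma mul_self_mul_conjTranspose (h : IsMP A X) : X * A * Aᴴ = Aᴴ := by
  rw [← h.2.2.2, ← conjTranspose_mul, ← Matrix.mul_assoc, h.1]

lemma mul_eq_self_iff {P : Matrix m m ℂ} (h : IsMP A X) (hP : P.IsHermitian) :
    P * A = A ↔ X * P = X := by
  constructor
  · intro hPA
    calc X * P = X * Xᴴ * Aᴴ * P := by rw [h.mul_conjTranspose_mul_conjTranspose]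
      _ = X * Xᴴ * (P * A)ᴴ := by rw [conjTranspose_mul, hP.eq]; simp only [Matrix.mul_assoc]
      _ = X := by rw [hPA, h.mul_conjTranspose_mul_conjTranspose]
  · intro hXP
    calc P * A = P * (Xᴴ * Aᴴ * A) := by rw [h.symm.conjTranspose_mul_conjTranspose_mul]
      _ = (X * P)ᴴ * Aᴴ * A := by rw [conjTranspose_mul, hP.eq]; simp only [Matrix.mul_assoc]
      _ = A := by rw [hXP, h.symm.conjTranspose_mul_conjTranspose_mul]

lemma mul_mul_eq_self_iff (h : IsMP A X) (B : Matrix m n ℂ) :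
    X * B * X = X ↔ Aᴴ * B * Aᴴ = Aᴴ * A * Aᴴ := by
  constructor
  · intro hB
    calc Aᴴ * B * Aᴴ = Aᴴ * A * X * B * (X * A * Aᴴ) := by
          rw [h.conjTranspose_mul_self_mul, h.mul_self_mul_conjTranspose]
      _ = Aᴴ * A * (X * B * X) * A * Aᴴ := by simp only [Matrix.mul_assoc]
      _ = Aᴴ * A * Aᴴ := by rw [hB, h.conjTranspose_mul_self_mul]
  · intro hB
    calc X * B * X = X * Xᴴ * Aᴴ * B * (Aᴴ * Xᴴ * X) := by
          rw [h.mul_conjTranspose_mul_conjTranspose, h.conjTranspose_mul_conjTranspose_mul]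
      _ = X * Xᴴ * (Aᴴ * B * Aᴴ) * Xᴴ * X := by simp only [Matrix.mul_assoc]
      _ = X * Xᴴ * Aᴴ * A * (Aᴴ * Xᴴ * X) := by rw [hB]; simp only [Matrix.mul_assoc]
      _ = X := by
          rw [h.mul_conjTranspose_mul_conjTranspose, h.conjTranspose_mul_conjTranspose_mul, h.2.1]

end IsMP

lemma diamondLE_iff_of_isMP {A B : Matrix m n ℂ} {Ad Bd : Matrix n m ℂ}
    (hA : IsMP A Ad) (hB : IsMP B Bd) :
    diamondLE A B ↔ Ad * B * Bd = Ad ∧ Bd * B * Ad = Ad ∧ Ad * B * Ad = Ad := by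
  have hcol : mrange Aᴴ ≤ mrange Bᴴ ↔ A * (Bd * B) = A := by
    rw [mrange_le_mrange_iff hB.conjTranspose.1, ← conjTranspose_inj]
    simp only [conjTranspose_mul, conjTranspose_conjTranspose, Matrix.mul_assoc]
  have hcore : A * Bᴴ * A = A * Aᴴ * A ↔ Ad * B * Ad = Ad := by
    rw [hA.mul_mul_eq_self_iff, ← conjTranspose_inj]
    simp only [conjTranspose_mul, conjTranspose_conjTranspose, Matrix.mul_assoc]
  rw [diamondLE, mrange_le_mrange_iff hB.1, hcol, hcore, hA.mul_eq_self_iff hB.2.2.1,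
    ← hA.symm.mul_eq_self_iff hB.2.2.2, Matrix.mul_assoc Ad B Bd]

end MoorePenrose

theorem stmt10 {m n : ℕ} (A B : Matrix (Fin m) (Fin n) ℂ) (Ad Bd : Matrix (Fin n) (Fin m) ℂ)
    (hAd : IsMP A Ad) (hBd : IsMP B Bd) :
    diamondLE A B ↔ ∀ W : Matrix (Fin m) (Fin n) ℂ,
      Ad = Ad * B * Ad + Ad * W * Ad - Ad * B * Bd * W * Bd * B * Ad := by
  rw [diamondLE_iff_of_isMP hAd hBd, forall_eq_add_mul_mul_sub_iff hBd.1]
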